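/- The function F₁ satisfies all the defining properties of an N-function: F₁ is even, F₁(s) ≥ 0 for all s, F₁(s) = 0 if and only if s = 0, F₁(s)/|s| → 0 as s → 0 (s ≠ 0), and F₁(s)/|s| → +∞ as |s| → +∞. -/

import Mathlib

open Real Filter

noncomputable def F1 (δ₀ s : ℝ) : ℝ :=
  if s = 0 then 0
  else if |s| < δ₀ then -(1/2) * s^2 * Real.log (s^2)
  else -(1/2) * s^2 * (Real.log (δ₀^2) + 3) + 2*δ₀*|s| - δ₀^2/2

noncomputable def F1' (δ₀ s : ℝ) : ℝ :=
  if s = 0 then 0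
  else if |s| < δ₀ then -(Real.log (s^2) + 1) * s
  else -(Real.log (δ₀^2) + 3) * s + 2*δ₀*(Real.sign s)

noncomputable def F2 (δ₀ s : ℝ) : ℝ :=
  if |s| < δ₀ then 0
  else (1/2) * s^2 * Real.log (s^2/δ₀^2) + 2*δ₀*|s| - (3/2)*s^2 - δ₀^2/2

noncomputable def F2' (δ₀ s : ℝ) : ℝ :=
  if |s| < δ₀ then 0
  else s * Real.log (s^2/δ₀^2) - 2*s + 2*δ₀*(Real.sign s)

/-!
For `0 < |s| < δ₀` one has `F1 δ₀ s = |s| * negMulLog |s|`, which is positive because `δ₀ < 1`,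
and `F1 δ₀ s / |s| = negMulLog |s| → 0`. For `|s| ≥ δ₀` the hypothesis `δ₀ < exp (-3/2)` makes
`c = -(log δ₀² + 3)` positive, and `F1 δ₀ s - c s² / 2 = 2 δ₀ |s| - δ₀² / 2 > 0`, so `F1 δ₀ s` is
positive and `F1 δ₀ s / |s| ≥ c |s| / 2 → ∞`.
-/

open Topology

lemma log_sq_add_three_neg {δ₀ : ℝ} (hδ₀ : 0 < δ₀) (hδ₀' : δ₀ < Real.exp (-(3/2))) :
    Real.log (δ₀^2) + 3 < 0 := by
  have : Real.log δ₀ < -(3/2) := (Real.log_lt_iff_lt_exp hδ₀).mpr hδ₀'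
  rw [Real.log_pow]
  push_cast
  linarith

lemma negMulLog_pos {x : ℝ} (h0 : 0 < x) (h1 : x < 1) : 0 < negMulLog x :=
  mul_pos_of_neg_of_neg (neg_neg_of_pos h0) (Real.log_neg h0 h1)

section

variable {δ₀ s : ℝ}

lemma F1_neg (δ₀ s : ℝ) : F1 δ₀ (-s) = F1 δ₀ s := by
  simp only [F1, neg_eq_zero, abs_neg, neg_sq]

lemma F1_zero (δ₀ : ℝ) : F1 δ₀ 0 = 0 := if_pos rfl

lemma F1_eq_abs_mul_negMulLog (hs : s ≠ 0) (h : |s| < δ₀) :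
    F1 δ₀ s = |s| * negMulLog |s| := by
  rw [F1, if_neg hs, if_pos h, negMulLog, ← sq_abs, Real.log_pow]
  push_cast
  ring

lemma F1_eq_of_le_abs (hδ₀ : 0 < δ₀) (h : δ₀ ≤ |s|) :
    F1 δ₀ s = -(1/2) * s^2 * (Real.log (δ₀^2) + 3) + 2*δ₀*|s| - δ₀^2/2 := by
  have hs : s ≠ 0 := abs_pos.mp (hδ₀.trans_le h)
  rw [F1, if_neg hs, if_neg h.not_gt]

lemma F1_pos_of_abs_lt (hδ₁ : δ₀ ≤ 1) (hs : s ≠ 0) (h : |s| < δ₀) : 0 < F1 δ₀ s := by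
  have hs₀ : 0 < |s| := abs_pos.mpr hs
  rw [F1_eq_abs_mul_negMulLog hs h]
  exact mul_pos hs₀ (negMulLog_pos hs₀ (h.trans_le hδ₁))

lemma mul_sq_lt_F1_of_le_abs (hδ₀ : 0 < δ₀) (h : δ₀ ≤ |s|) :
    -(Real.log (δ₀^2) + 3) / 2 * s^2 < F1 δ₀ s := by
  rw [F1_eq_of_le_abs hδ₀ h]
  nlinarith [mul_le_mul_of_nonneg_left h hδ₀.le]

lemma F1_pos (hδ₀ : 0 < δ₀) (hδ₀' : δ₀ < Real.exp (-(3/2))) (hs : s ≠ 0) : 0 < F1 δ₀ s := by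
  rcases lt_or_ge |s| δ₀ with h | h
  · have hδ₁ : δ₀ ≤ 1 := hδ₀'.le.trans (Real.exp_le_one_iff.mpr (by norm_num))
    exact F1_pos_of_abs_lt hδ₁ hs h
  · have hc : 0 ≤ -(Real.log (δ₀^2) + 3) / 2 * s^2 :=
      mul_nonneg (by linarith [log_sq_add_three_neg hδ₀ hδ₀']) (sq_nonneg s)
    exact hc.trans_lt (mul_sq_lt_F1_of_le_abs hδ₀ h)

lemma tendsto_F1_div_abs_nhdsNE (hδ₀ : 0 < δ₀) :
    Tendsto (fun s => F1 δ₀ s / |s|) (𝓝[≠] 0) (𝓝 0) := by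
  have hlim : Tendsto (fun s : ℝ => negMulLog |s|) (𝓝 0) (𝓝 0) :=
    (continuous_negMulLog.comp continuous_abs).tendsto' 0 0 (by simp)
  refine (hlim.mono_left nhdsWithin_le_nhds).congr' ?_
  filter_upwards [nhdsWithin_le_nhds (Metric.ball_mem_nhds (0 : ℝ) hδ₀), self_mem_nhdsWithin]
    with s hsδ (hs : s ≠ 0)
  rw [Metric.mem_ball, Real.dist_0_eq_abs] at hsδ
  rw [F1_eq_abs_mul_negMulLog hs hsδ, mul_div_cancel_left₀ _ (abs_ne_zero.mpr hs)]

lemma tendsto_F1_div_abs_cocompact (hδ₀ : 0 < δ₀) (hc : Real.log (δ₀^2) + 3 < 0) :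
    Tendsto (fun s => F1 δ₀ s / |s|) (cocompact ℝ) atTop := by
  have habs : Tendsto (fun s : ℝ => |s|) (cocompact ℝ) atTop := tendsto_norm_cocompact_atTop
  have hc' : 0 < -(Real.log (δ₀^2) + 3) / 2 := by linarith
  refine tendsto_atTop_mono' _ ?_ (habs.const_mul_atTop hc')
  filter_upwards [habs.eventually_ge_atTop δ₀] with s h
  rw [le_div_iff₀ (hδ₀.trans_le h), mul_assoc, ← sq, sq_abs]
  exact (mul_sq_lt_F1_of_le_abs hδ₀ h).le

end

theorem stmt_6 (δ₀ : ℝ) (hδ₀ : 0 < δ₀) (hδ₀' : δ₀ < Real.exp (-(3/2))) :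
    (∀ s : ℝ, F1 δ₀ (-s) = F1 δ₀ s) ∧
    (∀ s : ℝ, 0 ≤ F1 δ₀ s) ∧
    (∀ s : ℝ, F1 δ₀ s = 0 ↔ s = 0) ∧
    Tendsto (fun s : ℝ => F1 δ₀ s / |s|) (nhdsWithin 0 {0}ᶜ) (nhds 0) ∧
    Tendsto (fun s : ℝ => F1 δ₀ s / |s|) (cocompact ℝ) atTop := by
  have hpos : ∀ {s}, s ≠ 0 → 0 < F1 δ₀ s := F1_pos hδ₀ hδ₀'
  refine ⟨F1_neg δ₀, fun s => ?_, fun s => ⟨fun h => ?_, ?_⟩, tendsto_F1_div_abs_nhdsNE hδ₀,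
    tendsto_F1_div_abs_cocompact hδ₀ (log_sq_add_three_neg hδ₀ hδ₀')⟩
  · rcases eq_or_ne s 0 with rfl | hs
    · exact (F1_zero δ₀).ge
    · exact (hpos hs).le
  · by_contra hs
    exact (hpos hs).ne' h
  · rintro rfl
    exact F1_zero δ₀
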